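/- arXiv:1704.06777 — 2 statements merged into one kernel-verified Lean document; each statement's English description precedes it below -/
import Mathlib

section
/- Let B > 0, a₀, a₁ > 0, λ₂, λ₃ ≥ 0 with λ₂ + λ₃ > 0, and define f(P) = P − λ₂ B log2(1 + a₀ P) − λ₃ B log2(1 + a₁ P) for P ≥ 0. Define u = (ln2/B) a₀ a₁, v = (ln2/B)(a₀ + a₁) − (λ₂ + λ₃) a₀ a₁, w = ln2/B − λ₂ a₀ − λ₃ a₁. If w < 0, then f is convex on [0, ∞), u > 0, v² − 4uw > 0, and the unique stationary point of f on (0, ∞) is P* = (sqrt(v² − 4uw) − v) / (2u), which is the unique unconstrained minimizer of f. -/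
/-!
Clearing denominators, `f'(P) = (u P² + v P + w) / ((ln 2 / B) (1 + a₀ P) (1 + a₁ P))`, and the
denominator is positive for `P ≥ 0`. Since `u > 0 > w`, the quadratic has exactly one positive
root `P*` and is a positive multiple of `P - P*` on `[0, ∞)`; hence `f` is strictly decreasing on
`[0, P*]` and strictly increasing on `[P*, ∞)`. Convexity holds because each `a / (1 + a P)`
decreases, so `f'` is monotone.
-/

open Real Set

theorem discrim_pos_of_pos_of_neg {u w : ℝ} (v : ℝ) (hu : 0 < u) (hw : w < 0) :
    0 < discrim u v w := by
  unfold discrim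
  nlinarith [sq_nonneg v, mul_pos hu (neg_pos.mpr hw)]

theorem abs_lt_sqrt_discrim {u w : ℝ} (v : ℝ) (hu : 0 < u) (hw : w < 0) :
    |v| < √(discrim u v w) := by
  rw [← sqrt_sq_eq_abs]
  exact sqrt_lt_sqrt (sq_nonneg v) (by unfold discrim; nlinarith)

theorem quadratic_root_pos {u w : ℝ} (v : ℝ) (hu : 0 < u) (hw : w < 0) :
    0 < (√(discrim u v w) - v) / (2 * u) :=
  div_pos (sub_pos.mpr (abs_lt.mp (abs_lt_sqrt_discrim v hu hw)).2) (by positivity)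

/-- The cofactor is `u x + (√D + v) / 2`, positive for `x ≥ 0` because `√D > |v|`. -/
theorem quadratic_eq_pos_mul_sub_root {u v w x : ℝ} (hu : 0 < u) (hw : w < 0) (hx : 0 ≤ x) :
    ∃ c > 0, u * x ^ 2 + v * x + w = c * (x - (√(discrim u v w) - v) / (2 * u)) := by
  have hv := abs_lt.mp (abs_lt_sqrt_discrim v hu hw)
  have hs := sq_sqrt (discrim_pos_of_pos_of_neg v hu hw).le
  set s := √(discrim u v w)
  refine ⟨u * x + (s + v) / 2, by nlinarith, ?_⟩
  unfold discrim at hs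
  field_simp
  linear_combination hs

theorem hasDerivAt_logb_one_add_mul (b a : ℝ) {x : ℝ} (hx : 1 + a * x ≠ 0) :
    HasDerivAt (fun P => logb b (1 + a * P)) (a / ((1 + a * x) * log b)) x := by
  have h := (((hasDerivAt_id x).const_mul a).const_add 1).log hx
  simp only [mul_one, id] at h
  simpa only [Real.logb, div_div] using h.div_const (log b)

theorem ContinuousOn.lt_of_deriv_neg_of_deriv_pos {f : ℝ → ℝ} {a r x : ℝ}
    (hf : ContinuousOn f (Ici a)) (har : a ≤ r) (hneg : ∀ y ∈ Ioo a r, deriv f y < 0)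
    (hpos : ∀ y ∈ Ioi r, 0 < deriv f y) (hx : a ≤ x) (hxr : x ≠ r) : f r < f x := by
  rcases hxr.lt_or_gt with hlt | hgt
  · have hanti : StrictAntiOn f (Icc a r) :=
      strictAntiOn_of_deriv_neg (convex_Icc a r) (hf.mono Icc_subset_Ici_self)
        (by rwa [interior_Icc])
    exact hanti ⟨hx, hlt.le⟩ ⟨har, le_rfl⟩ hlt
  · have hmono : StrictMonoOn f (Ici r) :=
      strictMonoOn_of_deriv_pos (convex_Ici r) (hf.mono (Ici_subset_Ici.mpr har))
        (by rwa [interior_Ici])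
    exact hmono self_mem_Ici hgt.le hgt

noncomputable def lagrangian (B a₀ a₁ lam₂ lam₃ P : ℝ) : ℝ :=
  P - lam₂ * B * logb 2 (1 + a₀ * P) - lam₃ * B * logb 2 (1 + a₁ * P)

noncomputable def lagrangianDeriv (B a₀ a₁ lam₂ lam₃ P : ℝ) : ℝ :=
  1 - lam₂ * B * (a₀ / ((1 + a₀ * P) * log 2)) - lam₃ * B * (a₁ / ((1 + a₁ * P) * log 2))

section Lagrangian

variable {B a₀ a₁ lam₂ lam₃ : ℝ}

theorem hasDerivAt_lagrangian {x : ℝ} (h₀ : 1 + a₀ * x ≠ 0) (h₁ : 1 + a₁ * x ≠ 0) :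
    HasDerivAt (lagrangian B a₀ a₁ lam₂ lam₃) (lagrangianDeriv B a₀ a₁ lam₂ lam₃ x) x :=
  ((hasDerivAt_id x).sub ((hasDerivAt_logb_one_add_mul 2 a₀ h₀).const_mul (lam₂ * B))).sub
    ((hasDerivAt_logb_one_add_mul 2 a₁ h₁).const_mul (lam₃ * B))

theorem lagrangianDeriv_eq_div (hB : B ≠ 0) {x : ℝ} (h₀ : 1 + a₀ * x ≠ 0)
    (h₁ : 1 + a₁ * x ≠ 0) :
    lagrangianDeriv B a₀ a₁ lam₂ lam₃ x =
      (log 2 / B * (a₀ * a₁) * x ^ 2 + (log 2 / B * (a₀ + a₁) - (lam₂ + lam₃) * (a₀ * a₁)) * x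
          + (log 2 / B - lam₂ * a₀ - lam₃ * a₁)) /
        (log 2 / B * ((1 + a₀ * x) * (1 + a₁ * x))) := by
  have hlog : log 2 ≠ 0 := (log_pos one_lt_two).ne'
  have h₁' : 1 + x * a₁ ≠ 0 := by rwa [mul_comm]
  unfold lagrangianDeriv
  field_simp
  ring

theorem monotoneOn_lagrangianDeriv (hB : 0 ≤ B) (ha₀ : 0 ≤ a₀) (ha₁ : 0 ≤ a₁)
    (hl₂ : 0 ≤ lam₂) (hl₃ : 0 ≤ lam₃) : MonotoneOn (lagrangianDeriv B a₀ a₁ lam₂ lam₃) (Ici 0) := by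
  intro x (hx : 0 ≤ x) y (hy : 0 ≤ y) hxy
  have hlog : 0 < log 2 := log_pos one_lt_two
  unfold lagrangianDeriv
  gcongr

theorem convexOn_lagrangian (hB : 0 ≤ B) (ha₀ : 0 ≤ a₀) (ha₁ : 0 ≤ a₁)
    (hl₂ : 0 ≤ lam₂) (hl₃ : 0 ≤ lam₃) : ConvexOn ℝ (Ici 0) (lagrangian B a₀ a₁ lam₂ lam₃) := by
  have hderiv : ∀ x ∈ Ici (0 : ℝ),
      HasDerivAt (lagrangian B a₀ a₁ lam₂ lam₃) (lagrangianDeriv B a₀ a₁ lam₂ lam₃ x) x :=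
    fun x (hx : 0 ≤ x) => hasDerivAt_lagrangian (by positivity) (by positivity)
  refine MonotoneOn.convexOn_of_deriv (convex_Ici 0)
    (fun x hx => (hderiv x hx).continuousAt.continuousWithinAt)
    (fun x hx => (hderiv x (interior_subset hx)).differentiableAt.differentiableWithinAt) ?_
  intro x hx y hy hxy
  rw [(hderiv x (interior_subset hx)).deriv, (hderiv y (interior_subset hy)).deriv]
  exact monotoneOn_lagrangianDeriv hB ha₀ ha₁ hl₂ hl₃ (interior_subset hx) (interior_subset hy) hxy

end Lagrangian

theorem stmt_7_general (B a₀ a₁ lam₂ lam₃ : ℝ) (hB : 0 < B) (ha₀ : 0 < a₀)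
    (ha₁ : 0 < a₁) (hl₂ : 0 ≤ lam₂) (hl₃ : 0 ≤ lam₃)
    (f : ℝ → ℝ)
    (hf : f = fun P : ℝ =>
      P - lam₂ * B * Real.logb 2 (1 + a₀ * P) - lam₃ * B * Real.logb 2 (1 + a₁ * P))
    (u v w : ℝ)
    (hu : u = Real.log 2 / B * (a₀ * a₁))
    (hv : v = Real.log 2 / B * (a₀ + a₁) - (lam₂ + lam₃) * (a₀ * a₁))
    (hw : w = Real.log 2 / B - lam₂ * a₀ - lam₃ * a₁)
    (hwneg : w < 0) :
    ConvexOn ℝ (Set.Ici (0 : ℝ)) f ∧ 0 < u ∧ 0 < v ^ 2 - 4 * u * w ∧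
      (∀ P ∈ Set.Ioi (0 : ℝ),
        deriv f P = 0 ↔ P = (Real.sqrt (v ^ 2 - 4 * u * w) - v) / (2 * u)) ∧
      (∀ P ∈ Set.Ici (0 : ℝ),
        P ≠ (Real.sqrt (v ^ 2 - 4 * u * w) - v) / (2 * u) →
          f ((Real.sqrt (v ^ 2 - 4 * u * w) - v) / (2 * u)) < f P) := by
  replace hf : f = lagrangian B a₀ a₁ lam₂ lam₃ := hf
  subst hf
  have hu₀ : 0 < u := by rw [hu]; positivity
  have hr := quadratic_root_pos v hu₀ hwneg
  set r := (√(discrim u v w) - v) / (2 * u)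
  have hderiv : ∀ x, 0 ≤ x → HasDerivAt (lagrangian B a₀ a₁ lam₂ lam₃)
      (lagrangianDeriv B a₀ a₁ lam₂ lam₃ x) x :=
    fun x hx => hasDerivAt_lagrangian (by positivity) (by positivity)
  have hsign : ∀ x, 0 ≤ x → ∃ c > 0, deriv (lagrangian B a₀ a₁ lam₂ lam₃) x = c * (x - r) := by
    intro x hx
    obtain ⟨c, hc, hq⟩ := quadratic_eq_pos_mul_sub_root (v := v) hu₀ hwneg hx
    have hM : 0 < log 2 / B * ((1 + a₀ * x) * (1 + a₁ * x)) := by positivity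
    refine ⟨_, div_pos hc hM, ?_⟩
    rw [(hderiv x hx).deriv, lagrangianDeriv_eq_div hB.ne' (by positivity) (by positivity),
      ← hu, ← hv, ← hw, hq]
    ring
  refine ⟨convexOn_lagrangian hB.le ha₀.le ha₁.le hl₂ hl₃, hu₀,
    discrim_pos_of_pos_of_neg v hu₀ hwneg, fun x (hx : 0 < x) => ?_, fun x (hx : 0 ≤ x) hxr => ?_⟩
  · obtain ⟨c, hc, h⟩ := hsign x hx.le
    rw [h, mul_eq_zero, sub_eq_zero, or_iff_right hc.ne']
    rfl
  · refine ContinuousOn.lt_of_deriv_neg_of_deriv_pos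
      (fun y hy => (hderiv y hy).continuousAt.continuousWithinAt) hr.le
      (fun y hy => ?_) (fun y hy => ?_) hx hxr
    · obtain ⟨c, hc, h⟩ := hsign y hy.1.le
      exact h ▸ mul_neg_of_pos_of_neg hc (sub_neg.mpr hy.2)
    · obtain ⟨c, hc, h⟩ := hsign y (hr.trans hy).le
      exact h ▸ mul_pos hc (sub_pos.mpr hy)

/-- Lemma 2 structure: for `f(P) = P − λ₂ B log2(1+a₀P) − λ₃ B log2(1+a₁P)`
with `w < 0`, `f` is convex on `[0,∞)`, `u > 0`, `v² − 4uw > 0`, and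
`P* = (√(v²−4uw) − v)/(2u)` is the unique stationary point of `f` on `(0,∞)`
and the unique unconstrained minimizer of `f` on `[0,∞)`. -/
theorem stmt_7 (B a₀ a₁ lam₂ lam₃ : ℝ) (hB : 0 < B) (ha₀ : 0 < a₀)
    (ha₁ : 0 < a₁) (hl₂ : 0 ≤ lam₂) (hl₃ : 0 ≤ lam₃) (hl : 0 < lam₂ + lam₃)
    (f : ℝ → ℝ)
    (hf : f = fun P : ℝ =>
      P - lam₂ * B * Real.logb 2 (1 + a₀ * P) - lam₃ * B * Real.logb 2 (1 + a₁ * P))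
    (u v w : ℝ)
    (hu : u = Real.log 2 / B * (a₀ * a₁))
    (hv : v = Real.log 2 / B * (a₀ + a₁) - (lam₂ + lam₃) * (a₀ * a₁))
    (hw : w = Real.log 2 / B - lam₂ * a₀ - lam₃ * a₁)
    (hwneg : w < 0) :
    ConvexOn ℝ (Set.Ici (0 : ℝ)) f ∧ 0 < u ∧ 0 < v ^ 2 - 4 * u * w ∧
      (∀ P ∈ Set.Ioi (0 : ℝ),
        deriv f P = 0 ↔ P = (Real.sqrt (v ^ 2 - 4 * u * w) - v) / (2 * u)) ∧
      (∀ P ∈ Set.Ici (0 : ℝ),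
        P ≠ (Real.sqrt (v ^ 2 - 4 * u * w) - v) / (2 * u) →
          f ((Real.sqrt (v ^ 2 - 4 * u * w) - v) / (2 * u)) < f P) :=
  stmt_7_general B a₀ a₁ lam₂ lam₃ hB ha₀ ha₁ hl₂ hl₃ f hf u v w hu hv hw hwneg
end

section
/- Let r₀₁, B be as follows: r₀₁(P) = B log2(1 + aP) with B, a > 0. For fixed μ₁ ≥ 0, λ₁ ≥ 0, μ₂ ∈ ℝ, κ, c, T, f_max, P_max > 0, consider minimizing G(E, τ, l) = E + μ₁ τ − λ₁ τ r₀₁(E/τ) + κ c³ l³/(T−τ)² + (λ₁ − μ₂) l subject to 0 ≤ E ≤ τ P_max, 0 ≤ τ < T, 0 ≤ l, c l ≤ (T−τ) f_max (with the convention τ r₀₁(E/τ) = 0 and E = 0 when τ = 0). Then G is jointly convex on this feasible set. -/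
/-!
Up to affine terms, `G` is a sum of two perspectives `t * f (x / t)` of convex functions of one
variable, evaluated at affine functions of `(E, τ, l)`: the convex function `-λ₁ r₀₁` (the Shannon
rate is concave) at `(x, t) = (E, τ)`, and the convex function `κ c³ x³` at `(x, t) = (l, T - τ)`.
The perspective of a convex function is jointly convex, by Jensen's inequality with the weights
`a t₁ / (a t₁ + b t₂)` and `b t₂ / (a t₁ + b t₂)`.
-/

open Set

/-- The perspective is extended to `t = 0` only at the origin, where `x / 0 = 0` makes the
formula `t * f (x / t)` vanish. -/
def perspectiveDomain : Set (ℝ × ℝ) := {p | 0 ≤ p.1 ∧ 0 ≤ p.2 ∧ (p.2 = 0 → p.1 = 0)}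

lemma ConvexOn.add_mul_map_div_add_le {D : Set ℝ} {f : ℝ → ℝ} (hf : ConvexOn ℝ D f)
    {u v p q : ℝ} (hu : u ∈ D) (hv : v ∈ D) (hp : 0 ≤ p) (hq : 0 ≤ q) :
    (p + q) * f ((p * u + q * v) / (p + q)) ≤ p * f u + q * f v := by
  rcases (add_nonneg hp hq).eq_or_lt with hpq | hpq
  · obtain ⟨rfl, rfl⟩ : p = 0 ∧ q = 0 := ⟨by linarith, by linarith⟩
    simp
  · have hsum : p / (p + q) + q / (p + q) = 1 := by field_simp
    calc (p + q) * f ((p * u + q * v) / (p + q))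
        = (p + q) * f ((p / (p + q)) • u + (q / (p + q)) • v) := by
          congr 2; simp only [smul_eq_mul]; field_simp
      _ ≤ (p + q) * ((p / (p + q)) • f u + (q / (p + q)) • f v) := by
          gcongr
          exact hf.2 hu hv (by positivity) (by positivity) hsum
      _ = p * f u + q * f v := by simp only [smul_eq_mul]; field_simp

lemma convex_perspectiveDomain : Convex ℝ perspectiveDomain := by
  have zero_of_mul : ∀ {c x t : ℝ}, (t = 0 → x = 0) → c * t = 0 → c * x = 0 := by
    intro c x t h hct
    rcases mul_eq_zero.1 hct with h' | h' <;> simp [h', h]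
  rintro ⟨x₁, t₁⟩ ⟨hx₁, ht₁, h₁⟩ ⟨x₂, t₂⟩ ⟨hx₂, ht₂, h₂⟩ a b ha hb -
  simp only [Prod.smul_mk, Prod.mk_add_mk, smul_eq_mul] at *
  refine ⟨by positivity, by positivity, fun ht => ?_⟩
  rw [zero_of_mul h₁ (by nlinarith), zero_of_mul h₂ (by nlinarith), add_zero]

theorem ConvexOn.perspective {f : ℝ → ℝ} (hf : ConvexOn ℝ (Ici 0) f) :
    ConvexOn ℝ perspectiveDomain (fun p => p.2 * f (p.1 / p.2)) := by
  refine ⟨convex_perspectiveDomain, ?_⟩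
  rintro ⟨x₁, t₁⟩ ⟨hx₁, ht₁, h₁⟩ ⟨x₂, t₂⟩ ⟨hx₂, ht₂, h₂⟩ a b ha hb -
  simp only [Prod.smul_mk, Prod.mk_add_mk, smul_eq_mul] at *
  calc (a * t₁ + b * t₂) * f ((a * x₁ + b * x₂) / (a * t₁ + b * t₂))
      = (a * t₁ + b * t₂) * f ((a * t₁ * (x₁ / t₁) + b * t₂ * (x₂ / t₂)) / (a * t₁ + b * t₂)) := by
        rw [mul_assoc, mul_div_cancel_of_imp' h₁, mul_assoc, mul_div_cancel_of_imp' h₂]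
    _ ≤ a * t₁ * f (x₁ / t₁) + b * t₂ * f (x₂ / t₂) :=
        hf.add_mul_map_div_add_le (div_nonneg hx₁ ht₁) (div_nonneg hx₂ ht₂)
          (mul_nonneg ha ht₁) (mul_nonneg hb ht₂)
    _ = a * (t₁ * f (x₁ / t₁)) + b * (t₂ * f (x₂ / t₂)) := by ring

theorem ConvexOn.perspective_comp {E : Type*} [AddCommGroup E] [Module ℝ E] {f : ℝ → ℝ}
    (hf : ConvexOn ℝ (Ici 0) f) {s : Set E} (hs : Convex ℝ s) (x t : E →ᵃ[ℝ] ℝ)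
    (hxt : ∀ p ∈ s, 0 ≤ x p ∧ 0 ≤ t p ∧ (t p = 0 → x p = 0)) :
    ConvexOn ℝ s (fun p => t p * f (x p / t p)) :=
  (hf.perspective.comp_affineMap (x.prod t)).subset hxt hs

theorem concaveOn_logb_one_add_mul {b a : ℝ} (hb : 1 < b) (ha : 0 ≤ a) :
    ConcaveOn ℝ (Ici 0) (fun x => Real.logb b (1 + a * x)) := by
  have hlog := (strictConcaveOn_log_Ioi.concaveOn.comp_affineMap
    (AffineMap.lineMap (1 : ℝ) (1 + a))).smul (inv_nonneg.2 (Real.log_pos hb).le)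
  refine (hlog.subset ?_ (convex_Ici 0)).congr ?_
  · intro x (hx : 0 ≤ x)
    simp only [mem_preimage, AffineMap.lineMap_apply_ring', mem_Ioi]
    nlinarith
  · intro x _
    simp only [Function.comp_apply, smul_eq_mul, AffineMap.lineMap_apply_ring', Real.logb]
    rw [show x * (1 + a - 1) + 1 = 1 + a * x by ring, div_eq_inv_mul]

lemma convex_feasible_set (c T fmax Pmax : ℝ) :
    Convex ℝ {p : ℝ × ℝ × ℝ | 0 ≤ p.1 ∧ p.1 ≤ p.2.1 * Pmax ∧ 0 ≤ p.2.1 ∧ p.2.1 < T ∧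
        0 ≤ p.2.2 ∧ c * p.2.2 ≤ (T - p.2.1) * fmax} := by
  rintro ⟨E₁, τ₁, l₁⟩ ⟨hE₁, hEP₁, hτ₁, hτT₁, hl₁, hlf₁⟩
    ⟨E₂, τ₂, l₂⟩ ⟨hE₂, hEP₂, hτ₂, hτT₂, hl₂, hlf₂⟩ u v hu hv huv
  simp only [Prod.smul_mk, Prod.mk_add_mk, smul_eq_mul, mem_ofPred_eq] at *
  refine ⟨by positivity, by nlinarith, by positivity, ?_, by positivity, ?_⟩
  · rcases hu.eq_or_lt with rfl | hu
    · simp_all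
    · nlinarith
  · nlinarith [mul_le_mul_of_nonneg_left hlf₁ hu, mul_le_mul_of_nonneg_left hlf₂ hv,
      congrArg (· * (T * fmax)) huv]

theorem stmt_8_general (B a μ₁ lam₁ μ₂ κ c T fmax Pmax : ℝ)
    (hB : 0 < B) (ha : 0 < a) (hlam₁ : 0 ≤ lam₁)
    (hκ : 0 < κ) (hc : 0 < c) :
    ConvexOn ℝ
      {p : ℝ × ℝ × ℝ | 0 ≤ p.1 ∧ p.1 ≤ p.2.1 * Pmax ∧ 0 ≤ p.2.1 ∧ p.2.1 < T ∧
        0 ≤ p.2.2 ∧ c * p.2.2 ≤ (T - p.2.1) * fmax}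
      (fun p : ℝ × ℝ × ℝ =>
        p.1 + μ₁ * p.2.1 - lam₁ * (p.2.1 * (B * Real.logb 2 (1 + a * (p.1 / p.2.1))))
          + κ * c ^ 3 * p.2.2 ^ 3 / (T - p.2.1) ^ 2 + (lam₁ - μ₂) * p.2.2) := by
  have hS := convex_feasible_set c T fmax Pmax
  have hrate : ConvexOn ℝ (Ici 0) (fun x : ℝ => -(lam₁ * B * Real.logb 2 (1 + a * x))) :=
    ((concaveOn_logb_one_add_mul one_lt_two ha.le).smul (mul_nonneg hlam₁ hB.le)).neg
  have hcube : ConvexOn ℝ (Ici 0) (fun x : ℝ => κ * c ^ 3 * x ^ 3) :=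
    (convexOn_pow 3).smul (by positivity)
  let energy : ℝ × ℝ × ℝ →ₗ[ℝ] ℝ := LinearMap.fst ℝ ℝ (ℝ × ℝ)
  let slot : ℝ × ℝ × ℝ →ₗ[ℝ] ℝ := (LinearMap.fst ℝ ℝ ℝ).comp (LinearMap.snd ℝ ℝ (ℝ × ℝ))
  let bits : ℝ × ℝ × ℝ →ₗ[ℝ] ℝ := (LinearMap.snd ℝ ℝ ℝ).comp (LinearMap.snd ℝ ℝ (ℝ × ℝ))
  have htransmit := hrate.perspective_comp hS energy.toAffineMap slot.toAffineMap
    fun p ⟨hE, hEP, hτ, _⟩ =>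
      ⟨hE, hτ, fun (h : p.2.1 = 0) => le_antisymm (by simpa [h] using hEP : p.1 ≤ 0) hE⟩
  have hcompute := hcube.perspective_comp hS bits.toAffineMap
    (AffineMap.const ℝ _ T - slot.toAffineMap) fun p ⟨_, _, _, hτT, hl, _⟩ =>
      ⟨hl, (sub_nonneg.2 hτT.le : 0 ≤ T - p.2.1), fun h => (sub_ne_zero.2 hτT.ne' h).elim⟩
  have hlin := (energy + μ₁ • slot + (lam₁ - μ₂) • bits).convexOn hS
  refine ((hlin.add htransmit).add hcompute).congr fun p ⟨_, _, _, hτT, _, _⟩ => ?_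
  change p.1 + μ₁ * p.2.1 + (lam₁ - μ₂) * p.2.2
      + p.2.1 * -(lam₁ * B * Real.logb 2 (1 + a * (p.1 / p.2.1)))
      + (T - p.2.1) * (κ * c ^ 3 * (p.2.2 / (T - p.2.1)) ^ 3) = _
  have : T - p.2.1 ≠ 0 := sub_ne_zero.2 hτT.ne'
  field_simp
  ring

/-- Joint convexity of the subproblem-(19) objective
`G(E,τ,l) = E + μ₁τ − λ₁ τ r₀₁(E/τ) + κc³l³/(T−τ)² + (λ₁−μ₂)l`
on the feasible set `{0 ≤ E ≤ τ P_max, 0 ≤ τ < T, 0 ≤ l, c l ≤ (T−τ) f_max}`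
(with the convention `τ r₀₁(E/τ) = 0` when `τ = 0`, which holds automatically
since division by zero yields zero). -/
theorem stmt_8 (B a μ₁ lam₁ μ₂ κ c T fmax Pmax : ℝ)
    (hB : 0 < B) (ha : 0 < a) (hμ₁ : 0 ≤ μ₁) (hlam₁ : 0 ≤ lam₁)
    (hκ : 0 < κ) (hc : 0 < c) (hT : 0 < T) (hfmax : 0 < fmax) (hPmax : 0 < Pmax) :
    ConvexOn ℝ
      {p : ℝ × ℝ × ℝ | 0 ≤ p.1 ∧ p.1 ≤ p.2.1 * Pmax ∧ 0 ≤ p.2.1 ∧ p.2.1 < T ∧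
        0 ≤ p.2.2 ∧ c * p.2.2 ≤ (T - p.2.1) * fmax}
      (fun p : ℝ × ℝ × ℝ =>
        p.1 + μ₁ * p.2.1 - lam₁ * (p.2.1 * (B * Real.logb 2 (1 + a * (p.1 / p.2.1))))
          + κ * c ^ 3 * p.2.2 ^ 3 / (T - p.2.1) ^ 2 + (lam₁ - μ₂) * p.2.2) :=
  stmt_8_general B a μ₁ lam₁ μ₂ κ c T fmax Pmax hB ha hlam₁ hκ hc
end
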